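/- arXiv:math/0512447 — 2 statements merged into one kernel-verified Lean document; each statement's English description precedes it below -/
import Mathlib

section
/- Let V > 2π and 0 ≤ y < 1. Then ∫_{2π}^{V} | Σ_{1 ≤ n ≤ √(t/(2π))} e(-ny) n^{-1/2 + it} |^4 dt ≪ V (log V)^{10}, with an absolute implied constant. -/
/-!
For `t ≤ V` the sum is `S(t) = ∑_{n ≤ K} 1_{t ≥ 2πn²} a_n n^{-1/2} e^{it log n}` with
`K = ⌊√(V/2π)⌋` and `|a_n| = 1`, so `S(t)²` is a sum over pairs `(n₁, n₂)` of truncated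
exponentials of frequency `log (n₁n₂)`. Integrating `|S(t)²|²` term by term, a pair of pairs with
products `P = Q` contributes at most `V/P`, and one with `P ≠ Q` at most
`2/(√(PQ) |log P - log Q|) ≤ 4/√(PQ) + 3/|P - Q|`, because `|log P - log Q| ≥ |P - Q| / max P Q`.

Every solution of `n₁n₂ = m₁m₂` is `(gu)(vw) = (gv)(uw)` with `gu, vw ≤ K`, so the diagonal
carries weight `∑ 1/P ≤ (log K + 1)⁴` and has at most `(K (log K + 1))²` elements. Writing `ν(P)`
for the number of pairs with product `P`, AM-GM gives
`∑ ν(P)ν(Q)/|P - Q| ≤ ∑_P ν(P)² ∑_{Q ≠ P} 1/|P - Q|`, which is at most the size of the diagonal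
times `4 (log K + 1)`. Since `K² ≤ V` the total is `O(V (log V)⁴)`.
-/

open Complex Real Finset MeasureTheory intervalIntegral

/-- `e(x) = exp(2πix)`. -/
noncomputable def eFun (x : ℝ) : ℂ := Complex.exp (2 * π * Complex.I * x)

open scoped ComplexConjugate

lemma sum_Icc_inv_le_one_add_log (K : ℕ) : ∑ n ∈ Icc 1 K, (n : ℝ)⁻¹ ≤ 1 + Real.log K := by
  simpa [harmonic_eq_sum_Icc] using harmonic_le_one_add_log K

lemma sum_Icc_inv_sqrt_le (K : ℕ) : ∑ n ∈ Icc 1 K, (√n)⁻¹ ≤ 2 * √K := by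
  induction K with
  | zero => simp
  | succ k ih =>
    rw [sum_Icc_succ_top (by omega), Nat.cast_succ]
    have hk := Real.sq_sqrt (Nat.cast_nonneg k : (0 : ℝ) ≤ k)
    have hk1 := Real.sq_sqrt (by positivity : (0 : ℝ) ≤ k + 1)
    have hpos : 0 < √((k : ℝ) + 1) := by positivity
    have step : (√((k : ℝ) + 1))⁻¹ ≤ 2 * √((k : ℝ) + 1) - 2 * √k := by
      rw [inv_le_iff_one_le_mul₀' hpos]
      nlinarith [sq_nonneg (√(k : ℝ) - √((k : ℝ) + 1))]
    linarith

lemma sum_comp_le_sum_of_injOn {ι κ : Type*} [DecidableEq κ] {s : Finset ι} {t : Finset κ}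
    {φ : ι → κ} (hφ : Set.InjOn φ s) (hst : ∀ i ∈ s, φ i ∈ t) {g : κ → ℝ}
    (hg : ∀ k ∈ t, 0 ≤ g k) : ∑ i ∈ s, g (φ i) ≤ ∑ k ∈ t, g k := by
  rw [← sum_image hφ]
  exact sum_le_sum_of_subset_of_nonneg (image_subset_iff.2 hst) fun k hk _ => hg k hk

lemma sum_Icc_inv_abs_sub_le {P M : ℕ} (hP : P ≤ M) :
    ∑ Q ∈ Icc 1 M, |(P : ℝ) - Q|⁻¹ ≤ 2 * ∑ n ∈ Icc 1 M, (n : ℝ)⁻¹ := by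
  -- at most one of the truncated differences `P - Q`, `Q - P` is nonzero, and `0⁻¹ = 0`
  have hsplit : ∀ Q : ℕ, |(P : ℝ) - Q|⁻¹ = ((P - Q : ℕ) : ℝ)⁻¹ + ((Q - P : ℕ) : ℝ)⁻¹ := by
    intro Q
    rcases le_total P Q with h | h
    · rw [Nat.sub_eq_zero_of_le h, Nat.cast_sub h, abs_sub_comm, abs_of_nonneg (by simpa using h)]
      simp
    · rw [Nat.sub_eq_zero_of_le h, Nat.cast_sub h, abs_of_nonneg (by simpa using h)]
      simp
  have hinv_ne {n : ℕ} (h : ((n : ℕ) : ℝ)⁻¹ ≠ 0) : n ≠ 0 := by rintro rfl; simp at h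
  simp_rw [hsplit, sum_add_distrib, two_mul]
  refine add_le_add ?_ ?_
  · rw [← sum_filter_of_ne (p := (· < P)) fun Q _ h =>
      Nat.sub_pos_iff_lt.1 (Nat.pos_of_ne_zero (hinv_ne h))]
    refine sum_comp_le_sum_of_injOn (g := fun n : ℕ => (n : ℝ)⁻¹) (φ := (P - ·))
      (fun Q hQ Q' hQ' e => ?_) (fun Q hQ => ?_) fun n _ => by positivity
    · simp only [coe_filter, Set.mem_ofPred_eq] at hQ hQ'; simp only at e; omega
    · simp only [mem_filter, mem_Icc] at hQ ⊢; omega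
  · rw [← sum_filter_of_ne (p := (P < ·)) fun Q _ h =>
      Nat.sub_pos_iff_lt.1 (Nat.pos_of_ne_zero (hinv_ne h))]
    refine sum_comp_le_sum_of_injOn (g := fun n : ℕ => (n : ℝ)⁻¹) (φ := (· - P))
      (fun Q hQ Q' hQ' e => ?_) (fun Q hQ => ?_) fun n _ => by positivity
    · simp only [coe_filter, Set.mem_ofPred_eq] at hQ hQ'; simp only at e; omega
    · simp only [mem_filter, mem_Icc] at hQ ⊢; omega

lemma inv_sqrt_mul_div_log_sub_le {p q : ℝ} (hp : 0 < p) (hpq : p < q) :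
    (√p * √q)⁻¹ * (2 / (Real.log q - Real.log p)) ≤ 4 * (√p * √q)⁻¹ + 3 * (q - p)⁻¹ := by
  have hq : 0 < q := hp.trans hpq
  have hqp : 0 < q - p := sub_pos.2 hpq
  have hlog : (q - p) / q ≤ Real.log q - Real.log p := by
    have := Real.one_sub_inv_le_log_of_pos (div_pos hq hp)
    rwa [inv_div, Real.log_div hq.ne' hp.ne', one_sub_div hq.ne'] at this
  have h2 : 2 / (Real.log q - Real.log p) ≤ 2 * q * (q - p)⁻¹ := by
    calc 2 / (Real.log q - Real.log p) ≤ 2 / ((q - p) / q) :=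
          div_le_div_of_nonneg_left zero_le_two (by positivity) hlog
      _ = 2 * q * (q - p)⁻¹ := by field_simp
  refine (mul_le_mul_of_nonneg_left h2 (by positivity)).trans ?_
  have hA : 0 ≤ (√p * √q)⁻¹ := by positivity
  have hB : 0 < (q - p)⁻¹ := by positivity
  rcases le_or_gt q (2 * p) with hq2 | hq2
  · have hAq : (√p * √q)⁻¹ * q ≤ 3 / 2 := by
      have hsq : √q ≤ 3 / 2 * √p := by
        nlinarith [Real.sq_sqrt hp.le, Real.sq_sqrt hq.le, Real.sqrt_nonneg p, Real.sqrt_nonneg q]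
      rw [inv_mul_le_iff₀ (by positivity)]
      nlinarith [Real.mul_self_sqrt hq.le, Real.sqrt_nonneg q]
    nlinarith
  · have hqB : q * (q - p)⁻¹ ≤ 2 := by
      rw [← div_eq_mul_inv, div_le_iff₀ hqp]; linarith
    nlinarith

lemma inv_sqrt_mul_div_abs_log_sub_le {p q : ℝ} (hp : 0 < p) (hq : 0 < q) (hpq : p ≠ q) :
    (√p * √q)⁻¹ * (2 / |Real.log p - Real.log q|) ≤ 4 * (√p * √q)⁻¹ + 3 * |p - q|⁻¹ := by
  wlog h : p < q generalizing p q
  · have := this hq hp hpq.symm (lt_of_le_of_ne (not_lt.1 h) hpq.symm)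
    rwa [mul_comm √q, abs_sub_comm, abs_sub_comm q] at this
  rw [abs_sub_comm, abs_of_pos (sub_pos.2 (Real.log_lt_log hp h)), abs_sub_comm,
    abs_of_pos (sub_pos.2 h)]
  exact inv_sqrt_mul_div_log_sub_le hp h

theorem exists_eq_mul_of_mul_eq_mul {α : Type*} [CommMonoidWithZero α]
    [IsLeftCancelMulZero α] [DecompositionMonoid α]
    {a b c d : α} (h : a * b = c * d) (hc : c ≠ 0) :
    ∃ g u v w, a = g * u ∧ b = v * w ∧ c = g * v ∧ d = u * w := by
  obtain ⟨g, v, ⟨u, rfl⟩, ⟨w, rfl⟩, rfl⟩ :=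
    exists_dvd_and_dvd_of_dvd_mul (Dvd.intro d h.symm : c ∣ a * b)
  refine ⟨g, u, v, w, rfl, rfl, rfl, mul_left_cancel₀ hc ?_⟩
  rw [← h, mul_mul_mul_comm]

theorem sum_sum_comp_le_mul_card_filter {ι β : Type*} [DecidableEq β] (s : Finset ι)
    (I : Finset β) {m : ι → β} (hm : ∀ i ∈ s, m i ∈ I) {w : β → β → ℝ}
    (hw : ∀ P Q, 0 ≤ w P Q) (hsymm : ∀ P Q, w P Q = w Q P) {R : ℝ}
    (hR : ∀ P ∈ I, ∑ Q ∈ I, w P Q ≤ R) :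
    ∑ i ∈ s, ∑ j ∈ s, w (m i) (m j) ≤ R * #{x ∈ s ×ˢ s | m x.1 = m x.2} := by
  set J := s.image m
  set ν : β → ℝ := fun P => #{i ∈ s | m i = P}
  have hcomp (F : β → β → ℝ) :
      ∑ i ∈ s, ∑ j ∈ s, F (m i) (m j) = ∑ P ∈ J, ∑ Q ∈ J, ν P * ν Q * F P Q := by
    rw [sum_comp (fun P => ∑ j ∈ s, F P (m j)) m]
    simp_rw [sum_comp (F _) m, nsmul_eq_mul, mul_sum, mul_assoc]
    rfl
  have hcard : (#{x ∈ s ×ˢ s | m x.1 = m x.2} : ℝ) = ∑ P ∈ J, ν P ^ 2 := by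
    rw [card_filter, sum_product, Nat.cast_sum]
    simp_rw [Nat.cast_sum, Nat.cast_ite, Nat.cast_one, Nat.cast_zero]
    rw [hcomp fun P Q => if P = Q then 1 else 0]
    simp [sq]
  have hrow : ∀ P ∈ J, ∑ Q ∈ J, w P Q ≤ R := fun P hP =>
    (sum_le_sum_of_subset_of_nonneg (image_subset_iff.2 hm) fun _ _ _ => hw _ _).trans
      (hR P (image_subset_iff.2 hm hP))
  calc ∑ i ∈ s, ∑ j ∈ s, w (m i) (m j) = ∑ P ∈ J, ∑ Q ∈ J, ν P * ν Q * w P Q := hcomp w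
    _ ≤ ∑ P ∈ J, ∑ Q ∈ J, (ν P ^ 2 / 2 * w P Q + ν Q ^ 2 / 2 * w Q P) := by
        gcongr with P _ Q _
        rw [hsymm Q P]
        nlinarith [mul_nonneg (sq_nonneg (ν P - ν Q)) (hw P Q)]
    _ = ∑ P ∈ J, ν P ^ 2 * ∑ Q ∈ J, w P Q := by
        rw [sum_congr rfl fun P _ => sum_add_distrib, sum_add_distrib, sum_comm (s := J) (t := J)
          (f := fun P Q => ν Q ^ 2 / 2 * w Q P), ← sum_add_distrib]
        refine sum_congr rfl fun P _ => ?_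
        rw [← sum_add_distrib, mul_sum]
        exact sum_congr rfl fun Q _ => by ring
    _ ≤ ∑ P ∈ J, ν P ^ 2 * R := by gcongr with P hP; exact hrow P hP
    _ = R * #{x ∈ s ×ˢ s | m x.1 = m x.2} := by rw [hcard, ← sum_mul, mul_comm]

def hyperbolaPairs (K : ℕ) : Finset (ℕ × ℕ) := {x ∈ Icc 1 K ×ˢ Icc 1 K | x.1 * x.2 ≤ K}

def mulDiagonal (K : ℕ) : Finset ((ℕ × ℕ) × (ℕ × ℕ)) :=
  {x ∈ (Icc 1 K ×ˢ Icc 1 K) ×ˢ (Icc 1 K ×ˢ Icc 1 K) | x.1.1 * x.1.2 = x.2.1 * x.2.2}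

lemma mk_mem_hyperbolaPairs {K g u : ℕ} : (g, u) ∈ hyperbolaPairs K ↔ g * u ∈ Icc 1 K := by
  simp only [hyperbolaPairs, mem_filter, mem_product, mem_Icc]
  constructor
  · rintro ⟨⟨⟨hg, -⟩, hu, -⟩, h⟩
    exact ⟨Nat.one_le_iff_ne_zero.2 (mul_ne_zero (by omega) (by omega)), h⟩
  · rintro ⟨h1, h⟩
    have hg : 0 < g := Nat.pos_of_mul_pos_right h1
    have hu : 0 < u := Nat.pos_of_mul_pos_left h1
    exact ⟨⟨⟨hg, (Nat.le_mul_of_pos_right g hu).trans h⟩, hu,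
      (Nat.le_mul_of_pos_left u hg).trans h⟩, h⟩

lemma mulDiagonal_subset_image (K : ℕ) :
    mulDiagonal K ⊆ (hyperbolaPairs K ×ˢ hyperbolaPairs K).image
      fun y => ((y.1.1 * y.1.2, y.2.1 * y.2.2), (y.1.1 * y.2.1, y.1.2 * y.2.2)) := by
  rintro ⟨⟨a, b⟩, c, d⟩ hz
  simp only [mulDiagonal, mem_filter, mem_product, mem_Icc] at hz
  obtain ⟨⟨⟨ha, hb⟩, hc, hd⟩, h⟩ := hz
  obtain ⟨g, u, v, w, rfl, rfl, rfl, rfl⟩ := exists_eq_mul_of_mul_eq_mul h (by omega)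
  exact mem_image.2 ⟨((g, u), (v, w)), mem_product.2 ⟨mk_mem_hyperbolaPairs.2 (mem_Icc.2 ha),
    mk_mem_hyperbolaPairs.2 (mem_Icc.2 hb)⟩, rfl⟩

lemma card_mulDiagonal_le (K : ℕ) : #(mulDiagonal K) ≤ #(hyperbolaPairs K) ^ 2 :=
  (card_le_card (mulDiagonal_subset_image K)).trans
    (card_image_le.trans_eq (by rw [card_product, sq]))

lemma sum_mulDiagonal_inv_le (K : ℕ) :
    ∑ z ∈ mulDiagonal K, ((z.1.1 * z.1.2 : ℕ) : ℝ)⁻¹ ≤ (∑ n ∈ Icc 1 K, (n : ℝ)⁻¹) ^ 4 := by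
  have hH : hyperbolaPairs K ⊆ Icc 1 K ×ˢ Icc 1 K := filter_subset _ _
  calc ∑ z ∈ mulDiagonal K, ((z.1.1 * z.1.2 : ℕ) : ℝ)⁻¹
      ≤ ∑ z ∈ (hyperbolaPairs K ×ˢ hyperbolaPairs K).image
          (fun y => ((y.1.1 * y.1.2, y.2.1 * y.2.2), (y.1.1 * y.2.1, y.1.2 * y.2.2))),
          ((z.1.1 * z.1.2 : ℕ) : ℝ)⁻¹ :=
        sum_le_sum_of_subset_of_nonneg (mulDiagonal_subset_image K) fun _ _ _ => by positivity
    _ ≤ ∑ y ∈ hyperbolaPairs K ×ˢ hyperbolaPairs K,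
          (y.1.1 : ℝ)⁻¹ * (y.1.2 : ℝ)⁻¹ * ((y.2.1 : ℝ)⁻¹ * (y.2.2 : ℝ)⁻¹) := by
        refine (sum_image_le_of_nonneg fun _ _ => by positivity).trans_eq ?_
        simp_rw [Nat.cast_mul, mul_inv]
    _ ≤ ∑ y ∈ (Icc 1 K ×ˢ Icc 1 K) ×ˢ (Icc 1 K ×ˢ Icc 1 K),
          (y.1.1 : ℝ)⁻¹ * (y.1.2 : ℝ)⁻¹ * ((y.2.1 : ℝ)⁻¹ * (y.2.2 : ℝ)⁻¹) :=
        sum_le_sum_of_subset_of_nonneg (product_subset_product hH hH) fun _ _ _ => by positivity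
    _ = (∑ n ∈ Icc 1 K, (n : ℝ)⁻¹) ^ 4 := by
        simp only [sum_product, ← mul_sum, ← sum_mul]; ring

lemma card_hyperbolaPairs_le (K : ℕ) : (#(hyperbolaPairs K) : ℝ) ≤ K * (1 + Real.log K) := by
  have hfib : ∀ g ∈ Icc 1 K, #{u ∈ Icc 1 K | g * u ≤ K} ≤ K / g := fun g hg =>
    calc #{u ∈ Icc 1 K | g * u ≤ K} ≤ #(Icc 1 (K / g)) := card_le_card fun u hu => by
          simp only [mem_filter, mem_Icc] at hu hg ⊢
          exact ⟨hu.1.1, (Nat.le_div_iff_mul_le (by omega)).2 (by linarith)⟩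
      _ = K / g := by simp
  have hcard : #(hyperbolaPairs K) = ∑ g ∈ Icc 1 K, #{u ∈ Icc 1 K | g * u ≤ K} := by
    simp only [hyperbolaPairs, card_filter, sum_product]
  calc (#(hyperbolaPairs K) : ℝ) = ∑ g ∈ Icc 1 K, (#{u ∈ Icc 1 K | g * u ≤ K} : ℝ) := by
        rw [hcard, Nat.cast_sum]
    _ ≤ ∑ g ∈ Icc 1 K, (K : ℝ) * (g : ℝ)⁻¹ := by
        gcongr with g hg
        exact (Nat.cast_le.2 (hfib g hg)).trans (Nat.cast_div_le.trans_eq (div_eq_mul_inv _ _))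
    _ ≤ K * (1 + Real.log K) := by rw [← mul_sum]; gcongr; exact sum_Icc_inv_le_one_add_log K

noncomputable def truncExp (T μ : ℝ) (c : ℂ) (t : ℝ) : ℂ :=
  (Set.Ici T).indicator (fun t : ℝ => c * cexp (μ * t * I)) t

noncomputable def cexpIntegralBound (L μ : ℝ) : ℝ := if μ = 0 then L else 2 / |μ|

lemma cexpIntegralBound_nonneg {L : ℝ} (hL : 0 ≤ L) (μ : ℝ) : 0 ≤ cexpIntegralBound L μ := by
  unfold cexpIntegralBound; split_ifs <;> positivity

lemma truncExp_mul_truncExp (T₁ T₂ μ₁ μ₂ : ℝ) (c₁ c₂ : ℂ) (t : ℝ) :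
    truncExp T₁ μ₁ c₁ t * truncExp T₂ μ₂ c₂ t = truncExp (max T₁ T₂) (μ₁ + μ₂) (c₁ * c₂) t := by
  simp only [truncExp, Set.indicator_apply, Set.mem_Ici, max_le_iff]
  split_ifs <;> simp_all [Complex.ofReal_add, add_mul, Complex.exp_add]
  ring

lemma conj_truncExp (T μ : ℝ) (c : ℂ) (t : ℝ) :
    conj (truncExp T μ c t) = truncExp T (-μ) (conj c) t := by
  simp only [truncExp, Set.indicator_apply, Set.mem_Ici]
  split_ifs
  · rw [map_mul, ← Complex.exp_conj]; simp
  · simp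

lemma intervalIntegrable_truncExp (T μ : ℝ) (c : ℂ) (a b : ℝ) :
    IntervalIntegrable (truncExp T μ c) volume a b := by
  have h : IntervalIntegrable (fun t : ℝ => c * cexp (μ * t * I)) volume a b :=
    (by fun_prop : Continuous fun t : ℝ => c * cexp (μ * t * I)).intervalIntegrable a b
  exact ⟨h.1.indicator measurableSet_Ici, h.2.indicator measurableSet_Ici⟩

lemma norm_setIntegral_Ioc_cexp_le {μ : ℝ} (hμ : μ ≠ 0) (a b : ℝ) :
    ‖∫ t in Set.Ioc a b, cexp (μ * t * I)‖ ≤ 2 / |μ| := by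
  rcases le_or_gt a b with hab | hab
  · have hμI : (μ : ℂ) * I ≠ 0 := mul_ne_zero (by exact_mod_cast hμ) I_ne_zero
    rw [← integral_of_le hab]
    simp_rw [mul_right_comm _ _ I]
    rw [integral_exp_mul_complex hμI, norm_div, norm_mul, norm_I, mul_one, norm_real,
      Real.norm_eq_abs]
    gcongr
    refine (norm_sub_le _ _).trans ?_
    simp_rw [mul_right_comm _ I, ← ofReal_mul, norm_exp_ofReal_mul_I]
    norm_num
  · rw [Set.Ioc_eq_empty hab.not_gt]; simp; positivity

lemma Ioc_inter_Ici_ae_eq (a b c : ℝ) :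
    (Set.Ioc a b ∩ Set.Ici c : Set ℝ) =ᵐ[volume] Set.Ioc (max a c) b := by
  rw [← Set.Ioc_inter_Ioi]
  exact (Filter.EventuallyEq.refl _ _).inter Ioi_ae_eq_Ici.symm

lemma norm_integral_truncExp_le (T μ : ℝ) (c : ℂ) {a b : ℝ} (hab : a ≤ b) :
    ‖∫ t in a..b, truncExp T μ c t‖ ≤ ‖c‖ * cexpIntegralBound (b - a) μ := by
  unfold cexpIntegralBound
  split_ifs with hμ
  · subst hμ
    rw [← abs_of_nonneg (sub_nonneg.2 hab)]
    refine intervalIntegral.norm_integral_le_of_norm_le_const fun t _ => ?_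
    exact (norm_indicator_le_norm_self _ _).trans (by simp)
  · rw [integral_of_le hab]
    unfold truncExp
    rw [setIntegral_indicator measurableSet_Ici, setIntegral_congr_set (Ioc_inter_Ici_ae_eq a b T),
      MeasureTheory.integral_const_mul, norm_mul]
    gcongr
    exact norm_setIntegral_Ioc_cexp_le hμ _ _

theorem integral_norm_sum_truncExp_sq_le {ι : Type*} (s : Finset ι) (T μ : ι → ℝ) (c : ι → ℂ)
    {a b : ℝ} (hab : a ≤ b) :
    ∫ t in a..b, ‖∑ i ∈ s, truncExp (T i) (μ i) (c i) t‖ ^ 2 ≤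
      ∑ i ∈ s, ∑ j ∈ s, ‖c i‖ * ‖c j‖ * cexpIntegralBound (b - a) (μ i - μ j) := by
  have hsq : ∀ t, ((‖∑ i ∈ s, truncExp (T i) (μ i) (c i) t‖ ^ 2 : ℝ) : ℂ) =
      ∑ i ∈ s, ∑ j ∈ s, truncExp (max (T i) (T j)) (μ i - μ j) (c i * conj (c j)) t := by
    intro t
    rw [ofReal_pow, ← mul_conj', map_sum, sum_mul_sum]
    simp_rw [conj_truncExp, truncExp_mul_truncExp, sub_eq_add_neg]
  calc ∫ t in a..b, ‖∑ i ∈ s, truncExp (T i) (μ i) (c i) t‖ ^ 2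
      ≤ ‖∫ t in a..b, ((‖∑ i ∈ s, truncExp (T i) (μ i) (c i) t‖ ^ 2 : ℝ) : ℂ)‖ := by
        rw [intervalIntegral.integral_ofReal, norm_real, Real.norm_eq_abs]; exact le_abs_self _
    _ = ‖∑ i ∈ s, ∑ j ∈ s, ∫ t in a..b,
          truncExp (max (T i) (T j)) (μ i - μ j) (c i * conj (c j)) t‖ := by
        simp_rw [hsq]
        rw [intervalIntegral.integral_finsetSum fun i _ => ?_]
        · simp_rw [intervalIntegral.integral_finsetSum fun j _ =>
            intervalIntegrable_truncExp _ _ _ a b]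
        · simpa only [← Finset.sum_apply] using
            IntervalIntegrable.sum _ fun j _ => intervalIntegrable_truncExp _ _ _ a b
    _ ≤ ∑ i ∈ s, ∑ j ∈ s, ‖∫ t in a..b,
          truncExp (max (T i) (T j)) (μ i - μ j) (c i * conj (c j)) t‖ :=
        (norm_sum_le _ _).trans (sum_le_sum fun i _ => norm_sum_le _ _)
    _ ≤ _ := by
        gcongr with i _ j _
        refine (norm_integral_truncExp_le _ _ _ hab).trans_eq ?_
        rw [norm_mul, RCLike.norm_conj]

lemma sum_truncExp_sq {ι : Type*} (s : Finset ι) (T μ : ι → ℝ) (c : ι → ℂ) (t : ℝ) :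
    (∑ i ∈ s, truncExp (T i) (μ i) (c i) t) ^ 2 =
      ∑ p ∈ s ×ˢ s, truncExp (max (T p.1) (T p.2)) (μ p.1 + μ p.2) (c p.1 * c p.2) t := by
  rw [sq, sum_mul_sum, sum_product]
  simp_rw [truncExp_mul_truncExp]

-- For `p = q` the last term is `3 * |0|⁻¹ = 0`.
lemma inv_sqrt_mul_cexpIntegralBound_le {p q : ℝ} (hp : 0 < p) (hq : 0 < q) (L : ℝ) :
    (√p * √q)⁻¹ * cexpIntegralBound L (Real.log p - Real.log q) ≤
      (if p = q then L * p⁻¹ else 0) + 4 * (√p * √q)⁻¹ + 3 * |p - q|⁻¹ := by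
  by_cases h : p = q
  · subst h
    simp only [cexpIntegralBound, sub_self, if_true, Real.mul_self_sqrt hp.le, abs_zero, inv_zero,
      mul_zero, add_zero]
    have : 0 ≤ 4 * p⁻¹ := by positivity
    linarith [mul_comm p⁻¹ L]
  · have hlog : Real.log p - Real.log q ≠ 0 :=
      sub_ne_zero.2 fun e => h (Real.log_injOn_pos hp hq e)
    rw [cexpIntegralBound, if_neg hlog, if_neg h, zero_add]
    exact inv_sqrt_mul_div_abs_log_sub_le hp hq h

lemma norm_mul_norm_mul_cexpIntegralBound_le {c : ℕ → ℂ} (hc : ∀ n, ‖c n‖ ≤ (√n)⁻¹)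
    {p q : ℕ × ℕ} (hp : p.1 * p.2 ≠ 0) (hq : q.1 * q.2 ≠ 0) {L : ℝ} (hL : 0 ≤ L) :
    ‖c p.1 * c p.2‖ * ‖c q.1 * c q.2‖ *
        cexpIntegralBound L (Real.log p.1 + Real.log p.2 - (Real.log q.1 + Real.log q.2)) ≤
      (if ((p.1 * p.2 : ℕ) : ℝ) = (q.1 * q.2 : ℕ) then L * ((p.1 * p.2 : ℕ) : ℝ)⁻¹ else 0) +
        4 * (√(p.1 * p.2 : ℕ) * √(q.1 * q.2 : ℕ))⁻¹ +
        3 * |((p.1 * p.2 : ℕ) : ℝ) - (q.1 * q.2 : ℕ)|⁻¹ := by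
  have hnorm (r : ℕ × ℕ) : ‖c r.1 * c r.2‖ ≤ (√(r.1 * r.2 : ℕ))⁻¹ := by
    rw [norm_mul, Nat.cast_mul, Real.sqrt_mul (Nat.cast_nonneg _), mul_inv]
    exact mul_le_mul (hc _) (hc _) (norm_nonneg _) (by positivity)
  have hlog {r : ℕ × ℕ} (hr : r.1 * r.2 ≠ 0) :
      Real.log r.1 + Real.log r.2 = Real.log (r.1 * r.2 : ℕ) := by
    obtain ⟨h1, h2⟩ := mul_ne_zero_iff.1 hr
    rw [Nat.cast_mul, Real.log_mul (Nat.cast_ne_zero.2 h1) (Nat.cast_ne_zero.2 h2)]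
  rw [hlog hp, hlog hq]
  refine (mul_le_mul_of_nonneg_right (mul_le_mul (hnorm p) (hnorm q) (norm_nonneg _)
    (by positivity)) (cexpIntegralBound_nonneg hL _)).trans ?_
  rw [← mul_inv]
  exact inv_sqrt_mul_cexpIntegralBound_le (by positivity) (by positivity) L

lemma sum_sum_ite_eq_sum_mulDiagonal (K : ℕ) (f : ℕ × ℕ → ℝ) :
    ∑ p ∈ Icc 1 K ×ˢ Icc 1 K, ∑ q ∈ Icc 1 K ×ˢ Icc 1 K,
        (if ((p.1 * p.2 : ℕ) : ℝ) = (q.1 * q.2 : ℕ) then f p else 0) =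
      ∑ z ∈ mulDiagonal K, f z.1 := by
  simp only [mulDiagonal, sum_filter, sum_product, Nat.cast_inj]

lemma sum_sum_inv_sqrt_mul (K : ℕ) :
    ∑ p ∈ Icc 1 K ×ˢ Icc 1 K, ∑ q ∈ Icc 1 K ×ˢ Icc 1 K, (√(p.1 * p.2 : ℕ) * √(q.1 * q.2 : ℕ))⁻¹ =
      (∑ n ∈ Icc 1 K, (√n)⁻¹) ^ 4 := by
  simp only [Nat.cast_mul, Real.sqrt_mul (Nat.cast_nonneg _), mul_inv, sum_product, ← mul_sum,
    ← sum_mul]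
  ring

lemma sum_sum_inv_abs_sub_le (K : ℕ) :
    ∑ p ∈ Icc 1 K ×ˢ Icc 1 K, ∑ q ∈ Icc 1 K ×ˢ Icc 1 K,
        |((p.1 * p.2 : ℕ) : ℝ) - (q.1 * q.2 : ℕ)|⁻¹ ≤
      4 * (1 + Real.log K) * #(mulDiagonal K) := by
  refine sum_sum_comp_le_mul_card_filter _ (Icc 1 (K * K)) (m := fun p : ℕ × ℕ => p.1 * p.2)
    (w := fun P Q : ℕ => |(P : ℝ) - Q|⁻¹)
    (fun p hp => ?_) (fun _ _ => by positivity) (fun P Q => by rw [abs_sub_comm])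
    (fun P hP => ?_)
  · simp only [mem_product, mem_Icc] at hp ⊢
    exact ⟨Nat.one_le_iff_ne_zero.2 (mul_ne_zero (by omega) (by omega)),
      Nat.mul_le_mul hp.1.2 hp.2.2⟩
  · refine (sum_Icc_inv_abs_sub_le (mem_Icc.1 hP).2).trans ?_
    have hlog : Real.log (K * K : ℕ) = 2 * Real.log K := by
      rw [Nat.cast_mul, ← sq, Real.log_pow, Nat.cast_ofNat]
    have := sum_Icc_inv_le_one_add_log (K * K)
    nlinarith

theorem integral_norm_sum_truncExp_pow_four_le_sum (K : ℕ) (T : ℕ → ℝ) {c : ℕ → ℂ}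
    (hc : ∀ n, ‖c n‖ ≤ (√n)⁻¹) {a b : ℝ} (hab : a ≤ b) :
    ∫ t in a..b, ‖∑ n ∈ Icc 1 K, truncExp (T n) (Real.log n) (c n) t‖ ^ 4 ≤
      (b - a) * ∑ z ∈ mulDiagonal K, ((z.1.1 * z.1.2 : ℕ) : ℝ)⁻¹ +
        4 * (∑ n ∈ Icc 1 K, (√n)⁻¹) ^ 4 +
        3 * ∑ p ∈ Icc 1 K ×ˢ Icc 1 K, ∑ q ∈ Icc 1 K ×ˢ Icc 1 K,
          |((p.1 * p.2 : ℕ) : ℝ) - (q.1 * q.2 : ℕ)|⁻¹ := by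
  have hpos : ∀ p ∈ Icc 1 K ×ˢ Icc 1 K, p.1 * p.2 ≠ 0 := fun p hp => by
    simp only [mem_product, mem_Icc] at hp; exact mul_ne_zero (by omega) (by omega)
  calc ∫ t in a..b, ‖∑ n ∈ Icc 1 K, truncExp (T n) (Real.log n) (c n) t‖ ^ 4
      = ∫ t in a..b, ‖∑ p ∈ Icc 1 K ×ˢ Icc 1 K, truncExp (max (T p.1) (T p.2))
          (Real.log p.1 + Real.log p.2) (c p.1 * c p.2) t‖ ^ 2 := by
        congr 1; ext t; rw [show 4 = 2 * 2 by rfl, pow_mul, ← norm_pow, sum_truncExp_sq]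
    _ ≤ ∑ p ∈ Icc 1 K ×ˢ Icc 1 K, ∑ q ∈ Icc 1 K ×ˢ Icc 1 K, ‖c p.1 * c p.2‖ * ‖c q.1 * c q.2‖ *
          cexpIntegralBound (b - a)
            (Real.log p.1 + Real.log p.2 - (Real.log q.1 + Real.log q.2)) :=
        integral_norm_sum_truncExp_sq_le _ _ _ _ hab
    _ ≤ ∑ p ∈ Icc 1 K ×ˢ Icc 1 K, ∑ q ∈ Icc 1 K ×ˢ Icc 1 K,
          ((if ((p.1 * p.2 : ℕ) : ℝ) = (q.1 * q.2 : ℕ) then (b - a) * ((p.1 * p.2 : ℕ) : ℝ)⁻¹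
              else 0) +
            4 * (√(p.1 * p.2 : ℕ) * √(q.1 * q.2 : ℕ))⁻¹ +
            3 * |((p.1 * p.2 : ℕ) : ℝ) - (q.1 * q.2 : ℕ)|⁻¹) := by
        gcongr with p hp q hq
        exact norm_mul_norm_mul_cexpIntegralBound_le hc (hpos p hp) (hpos q hq) (sub_nonneg.2 hab)
    _ = _ := by
        simp only [sum_add_distrib, ← mul_sum, sum_sum_ite_eq_sum_mulDiagonal,
          sum_sum_inv_sqrt_mul]

theorem integral_norm_sum_truncExp_pow_four_le (K : ℕ) (T : ℕ → ℝ) {c : ℕ → ℂ}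
    (hc : ∀ n, ‖c n‖ ≤ (√n)⁻¹) {a b : ℝ} (hab : a ≤ b) :
    ∫ t in a..b, ‖∑ n ∈ Icc 1 K, truncExp (T n) (Real.log n) (c n) t‖ ^ 4 ≤
      (b - a) * (1 + Real.log K) ^ 4 + 64 * K ^ 2 + 12 * K ^ 2 * (1 + Real.log K) ^ 3 := by
  have hH := sum_Icc_inv_le_one_add_log K
  have hlogK : 0 ≤ 1 + Real.log K := (sum_nonneg fun n _ => by positivity).trans hH
  have hdiag : (#(mulDiagonal K) : ℝ) ≤ (K * (1 + Real.log K)) ^ 2 :=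
    (Nat.cast_le.2 (card_mulDiagonal_le K)).trans_eq (Nat.cast_pow _ _) |>.trans
      (pow_le_pow_left₀ (by positivity) (card_hyperbolaPairs_le K) 2)
  calc _ ≤ _ := integral_norm_sum_truncExp_pow_four_le_sum K T hc hab
    _ ≤ (b - a) * (1 + Real.log K) ^ 4 + 4 * (2 * √K) ^ 4 +
          3 * (4 * (1 + Real.log K) * (K * (1 + Real.log K)) ^ 2) := by
        gcongr
        · exact (sum_mulDiagonal_inv_le K).trans
            (pow_le_pow_left₀ (sum_nonneg fun n _ => by positivity) hH 4)
        · exact sum_Icc_inv_sqrt_le K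
        · exact (sum_sum_inv_abs_sub_le K).trans (by gcongr)
    _ = _ := by
        rw [mul_pow, show (√(K : ℝ)) ^ 4 = (K : ℝ) ^ 2 by
          rw [show 4 = 2 * 2 by rfl, pow_mul, Real.sq_sqrt (Nat.cast_nonneg K)]]
        ring

lemma le_floor_sqrt_div_iff {n : ℕ} (hn : 0 < n) {x c : ℝ} (hc : 0 < c) :
    n ≤ ⌊√(x / c)⌋₊ ↔ c * n ^ 2 ≤ x := by
  rw [Nat.le_floor_iff (Real.sqrt_nonneg _), Real.le_sqrt' (by positivity), le_div_iff₀ hc,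
    mul_comm]

lemma sum_Icc_floor_sqrt_div_eq {M : Type*} [AddCommMonoid M] (f : ℕ → M) {c t V : ℝ}
    (hc : 0 < c) (htV : t ≤ V) :
    ∑ n ∈ Icc 1 ⌊√(t / c)⌋₊, f n = ∑ n ∈ Icc 1 ⌊√(V / c)⌋₊, if c * n ^ 2 ≤ t then f n else 0 := by
  rw [← sum_filter]
  refine sum_congr (ext fun n => ?_) fun _ _ => rfl
  simp only [mem_filter, mem_Icc]
  constructor
  · rintro ⟨hn, h⟩
    have h' := (le_floor_sqrt_div_iff hn hc).1 h
    exact ⟨⟨hn, (le_floor_sqrt_div_iff hn hc).2 (h'.trans htV)⟩, h'⟩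
  · rintro ⟨⟨hn, -⟩, h⟩
    exact ⟨hn, (le_floor_sqrt_div_iff hn hc).2 h⟩

lemma floor_sqrt_div_sq_le {x c : ℝ} (hx : 0 ≤ x) (hc : 1 ≤ c) : (⌊√(x / c)⌋₊ : ℝ) ^ 2 ≤ x :=
  calc (⌊√(x / c)⌋₊ : ℝ) ^ 2 ≤ √(x / c) ^ 2 := by gcongr; exact Nat.floor_le (Real.sqrt_nonneg _)
    _ = x / c := Real.sq_sqrt (by positivity)
    _ ≤ x := div_le_self hx hc

lemma natCast_cpow_add_I_mul {n : ℕ} (hn : n ≠ 0) (s : ℂ) (t : ℝ) :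
    (n : ℂ) ^ (s + I * t) = (n : ℂ) ^ s * cexp (Real.log n * t * I) := by
  rw [cpow_add _ _ (Nat.cast_ne_zero.2 hn)]
  congr 1
  rw [cpow_def_of_ne_zero (Nat.cast_ne_zero.2 hn), ← Complex.natCast_log]
  ring_nf

lemma norm_natCast_cpow_neg_half (n : ℕ) : ‖(n : ℂ) ^ (-(1 / 2 : ℂ))‖ = (√n)⁻¹ := by
  rcases Nat.eq_zero_or_pos n with rfl | hn
  · simp [zero_cpow]
  · rw [norm_natCast_cpow_of_pos hn, Real.sqrt_eq_rpow, ← Real.rpow_neg (Nat.cast_nonneg n)]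
    norm_num

lemma sum_mul_natCast_cpow_eq_sum_truncExp (a : ℕ → ℂ) {t V : ℝ} (htV : t ≤ V) :
    ∑ n ∈ Icc 1 ⌊√(t / (2 * π))⌋₊, a n * (n : ℂ) ^ (-(1 / 2 : ℂ) + I * t) =
      ∑ n ∈ Icc 1 ⌊√(V / (2 * π))⌋₊,
        truncExp (2 * π * n ^ 2) (Real.log n) (a n * (n : ℂ) ^ (-(1 / 2 : ℂ))) t := by
  rw [sum_Icc_floor_sqrt_div_eq _ Real.two_pi_pos htV]
  refine sum_congr rfl fun n hn => ?_
  rw [natCast_cpow_add_I_mul (by simp only [mem_Icc] at hn; omega), ← mul_assoc]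
  simp only [truncExp, Set.indicator_apply, Set.mem_Ici]

lemma one_le_log_of_two_pi_le {V : ℝ} (hV : 2 * π ≤ V) : 1 ≤ Real.log V := by
  rw [Real.le_log_iff_exp_le (Real.two_pi_pos.trans_le hV)]
  linarith [Real.exp_one_lt_d9, Real.pi_gt_three]

theorem integral_norm_sum_mul_natCast_cpow_pow_four_le {a : ℕ → ℂ} (ha : ∀ n, ‖a n‖ ≤ 1)
    {V : ℝ} (hV : 2 * π ≤ V) :
    ∫ t in (2 * π)..V, ‖∑ n ∈ Icc 1 ⌊√(t / (2 * π))⌋₊,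
        a n * (n : ℂ) ^ (-(1 / 2 : ℂ) + I * t)‖ ^ 4 ≤ 176 * V * Real.log V ^ 4 := by
  set K := ⌊√(V / (2 * π))⌋₊
  refine (le_of_eq (integral_congr fun t ht => ?_)).trans
    ((integral_norm_sum_truncExp_pow_four_le K (fun n => 2 * π * n ^ 2)
      (c := fun n => a n * (n : ℂ) ^ (-(1 / 2 : ℂ))) (fun n => ?_) hV).trans ?_)
  · rw [sum_mul_natCast_cpow_eq_sum_truncExp a (Set.uIcc_of_le hV ▸ ht).2]
  · rw [norm_mul, norm_natCast_cpow_neg_half]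
    exact mul_le_of_le_one_left (by positivity) (ha n)
  set L := Real.log V
  have hL := one_le_log_of_two_pi_le hV
  have hV0 : 0 < V := Real.two_pi_pos.trans_le hV
  have hK2 : (K : ℝ) ^ 2 ≤ V := floor_sqrt_div_sq_le hV0.le (by linarith [Real.pi_gt_three])
  have hK1 : 1 ≤ K := Nat.le_floor (by
    rw [Nat.cast_one, Real.one_le_sqrt, one_le_div (by positivity)]; exact hV)
  have hlogK : 1 + Real.log K ≤ 2 * L := by
    have : Real.log ((K : ℝ) ^ 2) ≤ L := Real.log_le_log (by positivity) hK2
    rw [Real.log_pow] at this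
    push_cast at this
    linarith
  have hlogK0 : 0 ≤ 1 + Real.log K := by
    have := Real.log_nonneg (Nat.one_le_cast.2 hK1 : (1 : ℝ) ≤ K); linarith
  calc (V - 2 * π) * (1 + Real.log K) ^ 4 + 64 * K ^ 2 + 12 * K ^ 2 * (1 + Real.log K) ^ 3
      ≤ V * (2 * L) ^ 4 + 64 * V + 12 * V * (2 * L) ^ 3 := by
        gcongr
        linarith [Real.two_pi_pos]
    _ ≤ 176 * V * L ^ 4 := by
        have h3 : L ^ 3 ≤ L ^ 4 := pow_le_pow_right₀ hL (by norm_num)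
        have h0 : 1 ≤ L ^ 4 := one_le_pow₀ hL
        nlinarith [mul_le_mul_of_nonneg_left h3 hV0.le, mul_le_mul_of_nonneg_left h0 hV0.le]

lemma norm_eFun (x : ℝ) : ‖eFun x‖ = 1 := by
  rw [eFun, show 2 * π * I * x = ((2 * π * x : ℝ) : ℂ) * I by push_cast; ring,
    norm_exp_ofReal_mul_I]

theorem fourth_moment_twisted_variable_length :
    ∃ C : ℝ, 0 < C ∧ ∀ (V y : ℝ), 2 * π < V → 0 ≤ y → y < 1 →
      ∫ t in (2 * π)..V,
          ‖∑ n ∈ Finset.Icc 1 ⌊Real.sqrt (t / (2 * π))⌋₊,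
            eFun (-(n : ℝ) * y) * (n : ℂ) ^ (-(1 / 2 : ℂ) + Complex.I * t)‖ ^ 4 ≤
        C * V * (Real.log V) ^ 10 := by
  refine ⟨176, by norm_num, fun V y hV _ _ => ?_⟩
  have hL := one_le_log_of_two_pi_le hV.le
  calc _ ≤ 176 * V * Real.log V ^ 4 :=
        integral_norm_sum_mul_natCast_cpow_pow_four_le (fun n => (norm_eFun _).le) hV.le
    _ ≤ 176 * V * Real.log V ^ 10 := by
        have hV0 : 0 < V := Real.two_pi_pos.trans hV
        gcongr 176 * V * ?_
        exact pow_le_pow_right₀ hL (by norm_num)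
end

section
/- Let α, β be nonzero reals, T ≥ 1, and let F(t) := Σ_{K<k≤2K} a_k (k+θ)^{it}, G(t) := Σ_{L<l≤2L} b_l (l+ξ)^{it}, D(t) := Σ_{K<k≤2K} (k+θ)^{it}, E(t) := Σ_{L<l≤2L} (l+ξ)^{it}, where |a_k| ≤ 1, |b_l| ≤ 1 and 0 ≤ θ, ξ < 1. Then ∫_0^T |F(αt) G(βt)|^2 dt ≪ (KL)^2 + (log T) · max_{1 ≤ V ≤ T} ∫_V^{2V} |D(αt) E(βt)|^2 dt. -/
/-!
Both products are exponential sums over pairs `(k, l)`, with coefficients `a_k b_l` and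
`1` respectively, and frequencies `γ_{kl} = α log (k + θ) + β log (l + ξ)`. Integrating
`|∑ c_i e^{i γ_i t}|²` against the Fejér weight `w(t) = 1 - |t|/S` on `[-S, S]` gives
`∑_{i,j} c_i c̄_j ŵ(γ_i - γ_j)`; since `ŵ ≥ 0`, this is at most its value at `c_i = 1`
as soon as all `|c_i| ≤ 1`.
With `S = 2T`, `w ≥ 1/2` on `[0, T]` and `w ≤ 1`, while `|∑ e^{i γ_i t}|²` is even, so
`∫_0^T |F G|² ≤ 4 ∫_0^{2T} |D E|²`. Finally `[0, 2T]` is `[0, 1]`, where the integrand is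
at most `(KL)²`, plus `O(log T)` dyadic intervals `[V, 2V]` with `1 ≤ V ≤ T`.
-/

open Complex ComplexConjugate Finset intervalIntegral
open MeasureTheory (volume)

section Symmetric

variable {E : Type*} [NormedAddCommGroup E] [NormedSpace ℝ E] {f : ℝ → E} {S : ℝ}

theorem integral_symmetric_of_odd (hf : ∀ t, f (-t) = -f t) : ∫ t in -S..S, f t = 0 := by
  have h := integral_comp_neg (a := -S) (b := S) f
  simp only [hf, intervalIntegral.integral_neg, neg_neg] at h
  have h2 : (2 : ℝ) • ∫ t in -S..S, f t = 0 := by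
    rw [two_smul]; nth_rewrite 1 [← h]; exact neg_add_cancel _
  exact (smul_eq_zero.mp h2).resolve_left two_ne_zero

theorem integral_symmetric_of_even (hfi : IntervalIntegrable f volume (-S) S)
    (hf : ∀ t, f (-t) = f t) : ∫ t in -S..S, f t = (2 : ℝ) • ∫ t in 0..S, f t := by
  have h0 : (0 : ℝ) ∈ Set.uIcc (-S) S := by
    rcases le_total 0 S with h | h <;> simp [h]
  have h := integral_comp_neg (a := 0) (b := S) f
  simp only [hf, neg_zero] at h
  rw [← integral_add_adjacent_intervals (b := 0) (hfi.mono_set (Set.uIcc_subset_uIcc_left h0))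
    (hfi.mono_set (Set.uIcc_subset_uIcc_right h0)), ← h, two_smul]

end Symmetric

theorem integral_le_mul_sub_of_le {f : ℝ → ℝ} {a b C : ℝ} (hab : a ≤ b)
    (hfi : IntervalIntegrable f volume a b) (hf : ∀ t, f t ≤ C) :
    ∫ t in a..b, f t ≤ C * (b - a) := by
  simpa [mul_comm] using integral_mono_on hab hfi intervalIntegrable_const fun t _ => hf t

theorem le_ciSup_mem {α ι : Type*} [ConditionallyCompleteLattice α] {s : Set ι} {f : ι → α}
    (hf : BddAbove (f '' s)) {x : ι} (hx : x ∈ s) : f x ≤ ⨆ i ∈ s, f i :=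
  le_ciSup₂ (f := fun i (_ : i ∈ s) => f i)
    (hf.mono <| Set.iUnion_subset fun _ =>
      Set.range_subset_iff.2 fun hi => Set.mem_image_of_mem f hi) x hx

section Dyadic

variable {Q : ℝ → ℝ} {T M : ℝ}

theorem integral_one_two_mul_le_of_dyadic (hQ : ∀ t, 0 ≤ Q t)
    (hQi : ∀ a b, IntervalIntegrable Q volume a b)
    (hM : ∀ V ∈ Set.Icc 1 T, ∫ t in V..2 * V, Q t ≤ M) {n : ℕ} (hn : 2 ^ n ≤ T)
    (hTn : T < 2 ^ (n + 1)) :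
    ∫ t in 1..2 * T, Q t ≤ (n + 2) * M := by
  have hdyadic : ∀ j ∈ range (n + 1), ∫ t in (2 : ℝ) ^ j..2 ^ (j + 1), Q t ≤ M :=
    fun j hj => pow_succ' (2 : ℝ) j ▸ hM _ ⟨one_le_pow₀ one_le_two,
      (pow_le_pow_right₀ one_le_two (Nat.lt_succ_iff.1 (mem_range.1 hj))).trans hn⟩
  have hhead : ∫ t in 1..2 ^ (n + 1), Q t ≤ (n + 1) * M := by
    rw [← pow_zero (2 : ℝ), ← sum_integral_adjacent_intervals fun j _ => hQi _ _]
    simpa using sum_le_card_nsmul _ _ _ hdyadic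
  have htail : ∫ t in (2 : ℝ) ^ (n + 1)..2 * T, Q t ≤ M :=
    (integral_mono_interval hTn.le (by rw [pow_succ']; linarith) le_rfl
      (MeasureTheory.ae_of_all _ fun t => hQ t) (hQi _ _)).trans
      (hM T ⟨(one_le_pow₀ one_le_two).trans hn, le_rfl⟩)
  rw [← integral_add_adjacent_intervals (hQi 1 (2 ^ (n + 1))) (hQi _ _)]
  linarith

theorem nat_add_two_le_five_mul_log {n : ℕ} (hT : 2 ≤ T) (hn : 2 ^ n ≤ T) :
    (n + 2 : ℝ) ≤ 5 * Real.log T := by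
  have hpow : n * Real.log 2 ≤ Real.log T := by
    rw [← Real.log_pow]; exact Real.log_le_log (by positivity) hn
  have htwo : Real.log 2 ≤ Real.log T := Real.log_le_log two_pos hT
  nlinarith [Real.log_two_gt_d9, (n.cast_nonneg : (0 : ℝ) ≤ n)]

theorem integral_zero_two_mul_le_of_dyadic {B : ℝ} (hQ : ∀ t, 0 ≤ Q t)
    (hQi : ∀ a b, IntervalIntegrable Q volume a b) (hQB : ∀ t, Q t ≤ B)
    (hM : ∀ V ∈ Set.Icc 1 T, ∫ t in V..2 * V, Q t ≤ M) (hT : 2 ≤ T) :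
    ∫ t in 0..2 * T, Q t ≤ B + 5 * Real.log T * M := by
  obtain ⟨n, hn, hTn⟩ := exists_nat_pow_near (one_le_two.trans hT) one_lt_two
  have hM0 : 0 ≤ M :=
    (integral_nonneg one_le_two fun t _ => hQ t).trans
      (by simpa using hM 1 ⟨le_rfl, by linarith⟩)
  have hunit : ∫ t in 0..1, Q t ≤ B := by
    simpa using integral_le_mul_sub_of_le zero_le_one (hQi 0 1) hQB
  rw [← integral_add_adjacent_intervals (hQi 0 1) (hQi _ _)]
  nlinarith [integral_one_two_mul_le_of_dyadic hQ hQi hM hn hTn,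
    nat_add_two_le_five_mul_log hT hn]

end Dyadic

/-- The Fejér weight, only used on `[-S, S]` (where it is nonnegative). -/
noncomputable def fejerWeight (S t : ℝ) : ℝ := 1 - |t| / S

section Fejer

variable {S t : ℝ}

@[fun_prop]
theorem continuous_fejerWeight (S : ℝ) : Continuous (fejerWeight S) := by
  unfold fejerWeight; fun_prop

theorem fejerWeight_neg : fejerWeight S (-t) = fejerWeight S t := by
  simp [fejerWeight]

theorem fejerWeight_nonneg (hS : 0 < S) (ht : |t| ≤ S) : 0 ≤ fejerWeight S t := by
  simpa [fejerWeight] using (div_le_one hS).2 ht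

theorem fejerWeight_le_one (hS : 0 ≤ S) : fejerWeight S t ≤ 1 := by
  unfold fejerWeight; have : 0 ≤ |t| / S := by positivity
  linarith

theorem one_half_le_fejerWeight (hS : 0 < S) (ht : |t| ≤ S / 2) : 1 / 2 ≤ fejerWeight S t := by
  unfold fejerWeight
  have : |t| / S ≤ 1 / 2 := by rw [div_le_div_iff₀ hS two_pos]; linarith
  linarith

theorem integral_one_sub_div_mul_cos {γ : ℝ} (hS : S ≠ 0) (hγ : γ ≠ 0) :
    ∫ t in 0..S, (1 - t / S) * Real.cos (γ * t) = (1 - Real.cos (γ * S)) / (S * γ ^ 2) := by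
  have hderiv : ∀ t ∈ Set.uIcc 0 S, HasDerivAt
      (fun t => (1 - t / S) * (Real.sin (γ * t) / γ) - Real.cos (γ * t) / (S * γ ^ 2))
      ((1 - t / S) * Real.cos (γ * t)) t := by
    intro t _
    have hlin : HasDerivAt (fun t : ℝ => γ * t) γ t := by
      simpa using (hasDerivAt_id t).const_mul γ
    have hw : HasDerivAt (fun t : ℝ => 1 - t / S) (-(1 / S)) t := by
      simpa using ((hasDerivAt_id t).div_const S).const_sub 1
    refine ((hw.mul (hlin.sin.div_const γ)).sub (hlin.cos.div_const (S * γ ^ 2))).congr_deriv ?_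
    field_simp
    ring
  rw [integral_eq_sub_of_hasDerivAt hderiv (by apply Continuous.intervalIntegrable; fun_prop)]
  field_simp
  simp
  ring

theorem integral_fejerWeight_mul_cos_nonneg (hS : 0 < S) (γ : ℝ) :
    0 ≤ ∫ t in -S..S, fejerWeight S t * Real.cos (γ * t) := by
  rw [integral_symmetric_of_even (by apply Continuous.intervalIntegrable; fun_prop)
    (fun t => by rw [fejerWeight_neg, mul_neg, Real.cos_neg]), smul_eq_mul]
  refine mul_nonneg zero_le_two ?_
  rcases eq_or_ne γ 0 with rfl | hγ
  · simp only [zero_mul, Real.cos_zero, mul_one]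
    exact integral_nonneg hS.le fun t ht =>
      fejerWeight_nonneg hS (abs_le.2 ⟨by linarith [ht.1], ht.2⟩)
  · rw [integral_congr (g := fun t => (1 - t / S) * Real.cos (γ * t)) fun t ht => by
      rw [Set.uIcc_of_le hS.le] at ht; simp [fejerWeight, abs_of_nonneg ht.1],
      integral_one_sub_div_mul_cos hS.ne' hγ]
    have := Real.cos_le_one (γ * S)
    have : 0 ≤ 1 - Real.cos (γ * S) := by linarith
    positivity

theorem integral_fejerWeight_mul_sin (γ : ℝ) :
    ∫ t in -S..S, fejerWeight S t * Real.sin (γ * t) = 0 :=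
  integral_symmetric_of_odd fun t => by rw [fejerWeight_neg, mul_neg, Real.sin_neg, mul_neg]

theorem integral_fejerWeight_mul_re_le (hS : 0 < S) (γ : ℝ) {z : ℂ} (hz : ‖z‖ ≤ 1) :
    ∫ t in -S..S, fejerWeight S t * (z * exp (↑(γ * t) * I)).re
      ≤ ∫ t in -S..S, fejerWeight S t * (exp (↑(γ * t) * I)).re := by
  have hre : ∀ t, fejerWeight S t * (z * exp (↑(γ * t) * I)).re
      = z.re * (fejerWeight S t * Real.cos (γ * t))
        - z.im * (fejerWeight S t * Real.sin (γ * t)) := by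
    intro t; rw [mul_re, exp_ofReal_mul_I_re, exp_ofReal_mul_I_im]; ring
  simp only [hre, exp_ofReal_mul_I_re]
  rw [intervalIntegral.integral_sub (by apply Continuous.intervalIntegrable; fun_prop)
      (by apply Continuous.intervalIntegrable; fun_prop),
    integral_const_mul, integral_const_mul, integral_fejerWeight_mul_sin, mul_zero, sub_zero]
  exact mul_le_of_le_one_left (integral_fejerWeight_mul_cos_nonneg hS γ)
    ((re_le_norm z).trans hz)

end Fejer

noncomputable def expSum {ι : Type*} (s : Finset ι) (c : ι → ℂ) (γ : ι → ℝ) (t : ℝ) : ℂ :=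
  ∑ i ∈ s, c i * exp (↑(γ i * t) * I)

namespace expSum

variable {ι : Type*} (s : Finset ι) (c : ι → ℂ) (γ : ι → ℝ)

@[fun_prop]
theorem continuous : Continuous (expSum s c γ) := by
  unfold expSum; fun_prop

theorem norm_sq (t : ℝ) :
    ‖expSum s c γ t‖ ^ 2 = ∑ p ∈ s ×ˢ s,
      (c p.1 * conj (c p.2) * exp (↑((γ p.1 - γ p.2) * t) * I)).re := by
  rw [← normSq_eq_norm_sq, ← ofReal_re (normSq _), ← mul_conj, expSum, map_sum, sum_mul_sum,
    ← sum_product', re_sum]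
  refine sum_congr rfl fun p _ => congrArg re ?_
  rw [map_mul, ← exp_conj, mul_mul_mul_comm, ← exp_add]
  congr 2
  simp only [map_mul, conj_ofReal, conj_I]
  push_cast
  ring

theorem one_apply_neg (t : ℝ) : expSum s 1 γ (-t) = conj (expSum s 1 γ t) := by
  simp only [expSum, Pi.one_apply, one_mul, map_sum, ← exp_conj, map_mul, conj_ofReal, conj_I]
  congr! 2
  push_cast
  ring

variable {s c}

theorem norm_le_card (hc : ∀ i ∈ s, ‖c i‖ ≤ 1) (t : ℝ) : ‖expSum s c γ t‖ ≤ s.card := by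
  refine (norm_sum_le _ _).trans ?_
  simpa [← ofReal_mul, norm_exp_ofReal_mul_I] using sum_le_sum hc

theorem norm_sq_le_card_sq (hc : ∀ i ∈ s, ‖c i‖ ≤ 1) (t : ℝ) :
    ‖expSum s c γ t‖ ^ 2 ≤ (s.card : ℝ) ^ 2 :=
  pow_le_pow_left₀ (norm_nonneg _) (norm_le_card γ hc t) 2

theorem integral_fejerWeight_mul_norm_sq_le {S : ℝ} (hS : 0 < S) (hc : ∀ i ∈ s, ‖c i‖ ≤ 1) :
    ∫ t in -S..S, fejerWeight S t * ‖expSum s c γ t‖ ^ 2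
      ≤ ∫ t in -S..S, fejerWeight S t * ‖expSum s 1 γ t‖ ^ 2 := by
  have hexpand : ∀ c : ι → ℂ, ∫ t in -S..S, fejerWeight S t * ‖expSum s c γ t‖ ^ 2
      = ∑ p ∈ s ×ˢ s, ∫ t in -S..S, fejerWeight S t *
          (c p.1 * conj (c p.2) * exp (↑((γ p.1 - γ p.2) * t) * I)).re := by
    intro c
    simp only [norm_sq, mul_sum]
    exact integral_finsetSum fun p _ => by apply Continuous.intervalIntegrable; fun_prop
  rw [hexpand, hexpand]
  refine sum_le_sum fun p hp => ?_
  rw [mem_product] at hp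
  have hcp : ‖c p.1 * conj (c p.2)‖ ≤ 1 := by
    simpa using mul_le_one₀ (hc _ hp.1) (norm_nonneg _) (hc _ hp.2)
  simpa using integral_fejerWeight_mul_re_le hS (γ p.1 - γ p.2) hcp

theorem integral_norm_sq_le {T : ℝ} (hT : 0 < T) (hc : ∀ i ∈ s, ‖c i‖ ≤ 1) :
    ∫ t in 0..T, ‖expSum s c γ t‖ ^ 2 ≤ 4 * ∫ t in 0..2 * T, ‖expSum s 1 γ t‖ ^ 2 := by
  set S := 2 * T
  have hS : 0 < S := by positivity
  have hint : ∀ {f : ℝ → ℝ} {a b : ℝ}, Continuous f → IntervalIntegrable f volume a b :=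
    fun hf => hf.intervalIntegrable _ _
  have hwP : ∀ t ∈ Set.Icc (-S) S, 0 ≤ 2 * (fejerWeight S t * ‖expSum s c γ t‖ ^ 2) :=
    fun t ht => by have := fejerWeight_nonneg hS (abs_le.2 ht); positivity
  calc ∫ t in 0..T, ‖expSum s c γ t‖ ^ 2
      ≤ ∫ t in 0..T, 2 * (fejerWeight S t * ‖expSum s c γ t‖ ^ 2) := by
        refine integral_mono_on hT.le (hint (by fun_prop)) (hint (by fun_prop)) fun t ht => ?_
        have := one_half_le_fejerWeight hS (t := t)
          (by rw [abs_of_nonneg ht.1]; linarith [ht.2])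
        nlinarith [sq_nonneg ‖expSum s c γ t‖]
    _ ≤ ∫ t in -S..S, 2 * (fejerWeight S t * ‖expSum s c γ t‖ ^ 2) :=
        integral_mono_interval (by linarith) hT.le (by linarith)
          (MeasureTheory.ae_restrict_of_forall_mem measurableSet_Ioc
            fun t ht => hwP t (Set.Ioc_subset_Icc_self ht)) (hint (by fun_prop))
    _ = 2 * ∫ t in -S..S, fejerWeight S t * ‖expSum s c γ t‖ ^ 2 := integral_const_mul _ _
    _ ≤ 2 * ∫ t in -S..S, fejerWeight S t * ‖expSum s 1 γ t‖ ^ 2 := by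
        gcongr; exact integral_fejerWeight_mul_norm_sq_le γ hS hc
    _ ≤ 2 * ∫ t in -S..S, ‖expSum s 1 γ t‖ ^ 2 := by
        gcongr
        exact integral_mono_on (by linarith) (hint (by fun_prop)) (hint (by fun_prop)) fun t _ =>
          mul_le_of_le_one_left (sq_nonneg _) (fejerWeight_le_one hS.le)
    _ = 4 * ∫ t in 0..S, ‖expSum s 1 γ t‖ ^ 2 := by
        rw [integral_symmetric_of_even (hint (by fun_prop))
          (fun t => by rw [one_apply_neg, RCLike.norm_conj]), smul_eq_mul]
        ring

theorem integral_norm_sq_le_log_mul_iSup (hc : ∀ i ∈ s, ‖c i‖ ≤ 1) {T : ℝ} (hT : 1 ≤ T) :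
    ∫ t in 0..T, ‖expSum s c γ t‖ ^ 2 ≤ 20 * ((s.card : ℝ) ^ 2 + Real.log T *
      ⨆ V ∈ Set.Icc (1 : ℝ) T, ∫ t in V..2 * V, ‖expSum s 1 γ t‖ ^ 2) := by
  set M := ⨆ V ∈ Set.Icc (1 : ℝ) T, ∫ t in V..2 * V, ‖expSum s 1 γ t‖ ^ 2
  have hint : ∀ (c : ι → ℂ) a b,
      IntervalIntegrable (fun t => ‖expSum s c γ t‖ ^ 2) volume a b :=
    fun c a b => Continuous.intervalIntegrable (by fun_prop) a b
  have hone : ∀ t, ‖expSum s 1 γ t‖ ^ 2 ≤ (s.card : ℝ) ^ 2 :=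
    norm_sq_le_card_sq γ fun _ _ => by simp
  have hM : ∀ V ∈ Set.Icc 1 T, ∫ t in V..2 * V, ‖expSum s 1 γ t‖ ^ 2 ≤ M := by
    refine fun V hV => le_ciSup_mem (f := fun V => ∫ t in V..2 * V, ‖expSum s 1 γ t‖ ^ 2)
      ⟨s.card ^ 2 * T, ?_⟩ hV
    rintro _ ⟨V, hV, rfl⟩
    refine (integral_le_mul_sub_of_le (by linarith [hV.1]) (hint 1 _ _) hone).trans ?_
    nlinarith [hV.2, sq_nonneg (s.card : ℝ)]
  have hM0 : 0 ≤ M :=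
    (integral_nonneg (by norm_num) fun t _ => sq_nonneg _).trans (hM 1 ⟨le_rfl, hT⟩)
  have hlogM : 0 ≤ Real.log T * M := mul_nonneg (Real.log_nonneg hT) hM0
  rcases lt_or_ge T 2 with hT2 | hT2
  · have := integral_le_mul_sub_of_le (by linarith) (hint c 0 T) (norm_sq_le_card_sq γ hc)
    nlinarith [sq_nonneg (s.card : ℝ)]
  · have := integral_norm_sq_le γ (T := T) (by linarith) hc
    have := integral_zero_two_mul_le_of_dyadic (fun t => sq_nonneg _) (hint 1) hone hM hT2
    nlinarith [sq_nonneg (s.card : ℝ)]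

end expSum

theorem expSum_mul_expSum {ι κ : Type*} (s : Finset ι) (s' : Finset κ) (a : ι → ℂ) (b : κ → ℂ)
    (γ : ι → ℝ) (δ : κ → ℝ) (t : ℝ) :
    expSum s a γ t * expSum s' b δ t
      = expSum (s ×ˢ s') (fun p => a p.1 * b p.2) (fun p => γ p.1 + δ p.2) t := by
  rw [expSum, expSum, sum_mul_sum, ← sum_product', expSum]
  refine sum_congr rfl fun p _ => ?_
  rw [mul_mul_mul_comm, ← exp_add]
  push_cast
  ring_nf

theorem sum_mul_natCast_add_cpow_eq_expSum {s : Finset ℕ} {θ : ℝ} (hθ : ∀ k ∈ s, 0 < k + θ)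
    (a : ℕ → ℂ) (α t : ℝ) :
    ∑ k ∈ s, a k * ((k : ℂ) + θ) ^ (I * (α * t))
      = expSum s a (fun k => α * Real.log (k + θ)) t := by
  refine sum_congr rfl fun k hk => ?_
  have hpos := hθ k hk
  rw [show (k : ℂ) + θ = ((k + θ : ℝ) : ℂ) by push_cast; rfl,
    cpow_def_of_ne_zero (ofReal_ne_zero.2 hpos.ne'), ← ofReal_log hpos.le]
  push_cast
  ring_nf

theorem reduction_to_unit_coefficients :
    ∃ C : ℝ, 0 < C ∧ ∀ (α β θ ξ T : ℝ) (K L : ℕ) (a b : ℕ → ℂ),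
      α ≠ 0 → β ≠ 0 → 0 ≤ θ → θ < 1 → 0 ≤ ξ → ξ < 1 → 1 ≤ T →
      (∀ k ∈ Finset.Ioc K (2 * K), ‖a k‖ ≤ 1) →
      (∀ l ∈ Finset.Ioc L (2 * L), ‖b l‖ ≤ 1) →
      ∫ t in (0:ℝ)..T,
          ‖(∑ k ∈ Finset.Ioc K (2 * K), a k * ((k : ℂ) + θ) ^ (Complex.I * (α * t))) *
            (∑ l ∈ Finset.Ioc L (2 * L), b l * ((l : ℂ) + ξ) ^ (Complex.I * (β * t)))‖ ^ 2 ≤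
        C * (((K : ℝ) * L) ^ 2 + Real.log T *
          ⨆ V ∈ Set.Icc (1 : ℝ) T,
            ∫ t in V..(2 * V),
              ‖(∑ k ∈ Finset.Ioc K (2 * K), ((k : ℂ) + θ) ^ (Complex.I * (α * t))) *
                (∑ l ∈ Finset.Ioc L (2 * L), ((l : ℂ) + ξ) ^ (Complex.I * (β * t)))‖ ^ 2) := by
  refine ⟨20, by norm_num, fun α β θ ξ T K L a b _ _ hθ _ hξ _ hT ha hb => ?_⟩
  have hpos : ∀ (N : ℕ) {x : ℝ}, 0 ≤ x → ∀ k ∈ Ioc N (2 * N), 0 < (k : ℝ) + x :=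
    fun N x hx k hk => by
      have : 0 < k := (Nat.zero_le N).trans_lt (mem_Ioc.1 hk).1
      positivity
  set s := Ioc K (2 * K) ×ˢ Ioc L (2 * L)
  set γ : ℕ × ℕ → ℝ := fun p => α * Real.log (p.1 + θ) + β * Real.log (p.2 + ξ)
  have hprod : ∀ (a b : ℕ → ℂ) (t : ℝ),
      (∑ k ∈ Ioc K (2 * K), a k * ((k : ℂ) + θ) ^ (I * (α * t))) *
        (∑ l ∈ Ioc L (2 * L), b l * ((l : ℂ) + ξ) ^ (I * (β * t)))
        = expSum s (fun p => a p.1 * b p.2) γ t := fun a b t => by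
    rw [sum_mul_natCast_add_cpow_eq_expSum (hpos K hθ),
      sum_mul_natCast_add_cpow_eq_expSum (hpos L hξ), expSum_mul_expSum]
  have hunit : ∀ t : ℝ,
      (∑ k ∈ Ioc K (2 * K), ((k : ℂ) + θ) ^ (I * (α * t))) *
        (∑ l ∈ Ioc L (2 * L), ((l : ℂ) + ξ) ^ (I * (β * t))) = expSum s 1 γ t := fun t => by
    simpa [Pi.one_def] using hprod 1 1 t
  have hc : ∀ p ∈ s, ‖a p.1 * b p.2‖ ≤ 1 := fun p hp => by
    rw [mem_product] at hp
    simpa using mul_le_one₀ (ha _ hp.1) (norm_nonneg _) (hb _ hp.2)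
  have hcard : (s.card : ℝ) = K * L := by
    simp [s, card_product, Nat.card_Ioc, two_mul]
  simp_rw [hprod a b, hunit, ← hcard]
  exact expSum.integral_norm_sq_le_log_mul_iSup γ hc hT
end
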